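/- arXiv:math/9904152 — 2 statements merged into one kernel-verified Lean document; each statement's English description precedes it below -/
import Mathlib

section
/- Let k be a field and A ⊆ k((z)) a k-subalgebra such that the subgroup {ν(a/b) : a, b ∈ A \ {0}} of ℤ equals ℤ (i.e. rank A = 1) and A ∩ k[[z]] = k. If there exist f, g ∈ A with ν(f), ν(g) < 0 and gcd(ν(f), ν(g)) = 1, then dim_k(k((z)) / (A + k[[z]])) < ∞. -/
/-! If `ν(f) = -m` and `ν(g) = -n` with `m, n > 0` coprime, then by the Frobenius coin problem
the products `f^a g^b ∈ A` realise every valuation `≤ -mn`. A subspace containing `z^i k[[z]]`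
and elements of every valuation `< i` is all of `k((z))`, by cancelling leading terms one
at a time. Hence `k((z))` is spanned modulo `A + k[[z]]` by the finitely many `z^j` with
`-mn < j < 0`. -/

/- Common setup: `k((z))` is `LaurentSeries k`, `V = k((z)) ⊕ k((z))`,
`V₀ = k[[z]] ⊕ k[[z]]` (realized as the subspace of Laurent series with no
negative coefficients), `ν` is the `z`-adic valuation (`HahnSeries.order`). -/

set_option synthInstance.maxHeartbeats 1000000
set_option maxHeartbeats 1000000

noncomputable section

variable (k : Type) [Field k]

instance : IsScalarTower k (LaurentSeries k) (LaurentSeries k) :=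
  ⟨fun c a b => by
    rw [smul_eq_mul, smul_eq_mul, ← HahnSeries.single_zero_mul_eq_smul,
      ← HahnSeries.single_zero_mul_eq_smul, mul_assoc]⟩

instance (P : Submodule k (LaurentSeries k)) : HasQuotient ↥P (Submodule k ↥P) :=
  Submodule.hasQuotient

instance (P : Submodule k (LaurentSeries k × LaurentSeries k)) :
    HasQuotient ↥P (Submodule k ↥P) :=
  Submodule.hasQuotient

/-- The `k`-subspace `z^i k[[z]]` of `k((z))`. -/
def shiftSub (i : ℤ) : Submodule k (LaurentSeries k) where
  carrier := {f | ∀ n : ℤ, n < i → f.coeff n = 0}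
  add_mem' := by
    intro a b ha hb n hn
    simp [HahnSeries.coeff_add, ha n hn, hb n hn]
  zero_mem' := by intro n hn; simp
  smul_mem' := by
    intro c a ha n hn
    simp [HahnSeries.coeff_smul, ha n hn]

/-- `k[[z]]` as a `k`-subspace of `k((z))`. -/
abbrev posSub : Submodule k (LaurentSeries k) := shiftSub k 0

/-- `V = k((z)) ⊕ k((z))`. -/
abbrev V2 := LaurentSeries k × LaurentSeries k

/-- `z^i V₀ = z^i k[[z]] ⊕ z^i k[[z]]`. -/
def Vsub (i : ℤ) : Submodule k (V2 k) := (shiftSub k i).prod (shiftSub k i)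

/-- `V₀ = k[[z]] ⊕ k[[z]]`. -/
abbrev V0 : Submodule k (V2 k) := Vsub k 0

/-- The line `l₁ = k((z)) ⊕ 0`. -/
def lineOne : Submodule k (V2 k) := (⊤ : Submodule k (LaurentSeries k)).prod ⊥

/-- The line `l₂ = 0 ⊕ k((z))`. -/
def lineTwo : Submodule k (V2 k) := (⊥ : Submodule k (LaurentSeries k)).prod ⊤

/-- `W ⊆ V` is a Fredholm subspace of index `μ` with respect to `V₀`. -/
def IsFredholm (μ : ℤ) (W : Submodule k (V2 k)) : Prop :=
  FiniteDimensional k ↥(W ⊓ V0 k) ∧ FiniteDimensional k (V2 k ⧸ (W ⊔ V0 k)) ∧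
    (Module.finrank k ↥(W ⊓ V0 k) : ℤ) - Module.finrank k (V2 k ⧸ (W ⊔ V0 k)) = μ

/-- The stabilizer ring `A_W = {f ∈ k((z)) : f W ⊆ W}`, as a `k`-subspace of `k((z))`
(`f` acts diagonally on `V`). -/
def AWsub (W : Submodule k (V2 k)) : Submodule k (LaurentSeries k) where
  carrier := {f | ∀ w ∈ W, f • w ∈ W}
  add_mem' := by
    intro a b ha hb w hw
    rw [add_smul]
    exact W.add_mem (ha w hw) (hb w hw)
  zero_mem' := by
    intro w hw
    have h : (0 : LaurentSeries k) • w = 0 := by ext <;> simp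
    exact h ▸ W.zero_mem
  smul_mem' := by
    intro c a ha w hw
    rw [smul_assoc]
    exact W.smul_mem c (ha w hw)

/-- A `k`-subalgebra of `k((z))` viewed as a `k`-subspace. -/
def subalgSub (A : Subalgebra k (LaurentSeries k)) : Submodule k (LaurentSeries k) where
  carrier := A
  add_mem' := fun ha hb => A.add_mem ha hb
  zero_mem' := A.zero_mem
  smul_mem' := fun c a ha => by
    rw [← HahnSeries.single_zero_mul_eq_smul]
    refine A.mul_mem ?_ ha
    have h := A.algebraMap_mem c
    have e : algebraMap k (LaurentSeries k) c = HahnSeries.single (0 : ℤ) c := by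
      rw [HahnSeries.algebraMap_apply', PowerSeries.algebraMap_apply,
        HahnSeries.ofPowerSeries_C, HahnSeries.C_apply]
      simp
    rwa [e] at h

lemma Nat.exists_mul_add_mul_eq_of_coprime {m n d : ℕ} (hmn : m.Coprime n) (hd : m * n ≤ d) :
    ∃ a b : ℕ, a * m + b * n = d := by
  rcases le_or_gt m 1 with hm1 | hm1
  · interval_cases m
    · exact ⟨0, d, by simp [(Nat.coprime_zero_left n).1 hmn]⟩
    · exact ⟨d, 0, by simp⟩
  rcases le_or_gt n 1 with hn1 | hn1
  · interval_cases n
    · exact absurd ((Nat.coprime_zero_right m).1 hmn) hm1.ne'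
    · exact ⟨0, d, by simp⟩
  have hd' : d ∈ AddSubmonoid.closure ({m, n} : Set ℕ) := by
    by_contra hd'
    have := (frobeniusNumber_pair hmn hm1 hn1).2 hd'
    have := Nat.add_le_mul hm1 hn1
    omega
  obtain ⟨a, b, hab⟩ := (AddSubmonoid.mem_closure_pair m n d).mp hd'
  exact ⟨a, b, by simpa [smul_eq_mul] using hab⟩

section

variable {k}

lemma mem_shiftSub_of_le_order {i : ℤ} {x : LaurentSeries k} (h : i ≤ x.order) :
    x ∈ shiftSub k i :=
  fun _ hn => HahnSeries.coeff_eq_zero_of_lt_order (hn.trans_le h)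

lemma mem_shiftSub_add_one {i : ℤ} {x : LaurentSeries k} (hx : x ∈ shiftSub k i)
    (hxi : x.coeff i = 0) : x ∈ shiftSub k (i + 1) := by
  intro n hn
  rcases (Int.lt_add_one_iff.1 hn).lt_or_eq with hn | rfl
  exacts [hx n hn, hxi]

lemma shiftSub_le_of_shiftSub_add_one_le {P : Submodule k (LaurentSeries k)} {i : ℤ}
    (hP : shiftSub k (i + 1) ≤ P) {w : LaurentSeries k} (hwP : w ∈ P) (hw : w ≠ 0)
    (hwi : w.order = i) : shiftSub k i ≤ P := by
  intro x hx
  have hwc : w.coeff i ≠ 0 := hwi ▸ HahnSeries.coeff_order_eq_zero.not.2 hw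
  set c := x.coeff i / w.coeff i
  have hw' : w ∈ shiftSub k i := mem_shiftSub_of_le_order hwi.ge
  have hrest : x - c • w ∈ shiftSub k (i + 1) := by
    refine mem_shiftSub_add_one (sub_mem hx (Submodule.smul_mem _ c hw')) ?_
    simp [c, div_mul_cancel₀ _ hwc]
  simpa using add_mem (hP hrest) (P.smul_mem c hwP)

lemma eq_top_of_shiftSub_le_of_forall_order {P : Submodule k (LaurentSeries k)} {i₀ : ℤ}
    (hP : shiftSub k i₀ ≤ P) (horder : ∀ i < i₀, ∃ w ∈ P, w ≠ 0 ∧ w.order = i) : P = ⊤ := by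
  have hle : ∀ i ≤ i₀, shiftSub k i ≤ P := by
    intro i hi
    induction i, hi using Int.leInductionDown with
    | base => exact hP
    | pred i hi ih =>
      obtain ⟨w, hwP, hw, hwi⟩ := horder (i - 1) (by omega)
      exact shiftSub_le_of_shiftSub_add_one_le (by simpa using ih) hwP hw hwi
  refine eq_top_iff.2 fun x _ => hle (min x.order i₀) (min_le_right _ _) ?_
  exact mem_shiftSub_of_le_order (min_le_left _ _)

lemma finiteDimensional_quotient_of_forall_order {P : Submodule k (LaurentSeries k)}
    {i₀ i₁ : ℤ} (hP : shiftSub k i₀ ≤ P) (horder : ∀ i ≤ i₁, ∃ w ∈ P, w ≠ 0 ∧ w.order = i) :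
    FiniteDimensional k (LaurentSeries k ⧸ P) := by
  set T : Set (LaurentSeries k) := (fun i => HahnSeries.single i 1) '' Set.Ioo i₁ i₀
  have htop : P ⊔ Submodule.span k T = ⊤ := by
    refine eq_top_of_shiftSub_le_of_forall_order (hP.trans le_sup_left) fun i hi => ?_
    rcases le_or_gt i i₁ with h | h
    · obtain ⟨w, hwP, hw⟩ := horder i h
      exact ⟨w, Submodule.mem_sup_left hwP, hw⟩
    · exact ⟨HahnSeries.single i 1,
        Submodule.mem_sup_right (Submodule.subset_span ⟨i, ⟨h, hi⟩, rfl⟩),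
        HahnSeries.single_ne_zero one_ne_zero, HahnSeries.order_single one_ne_zero⟩
  refine ⟨Submodule.fg_def.2 ⟨P.mkQ '' T, ((Set.finite_Ioo i₁ i₀).image _).image _, ?_⟩⟩
  rw [← Submodule.map_span, Submodule.map_mkQ_eq_top, htop]

lemma Submonoid.exists_mem_order_eq_of_coprime (M : Submonoid (LaurentSeries k))
    {f g : LaurentSeries k} (hfM : f ∈ M) (hgM : g ∈ M) (hf0 : f ≠ 0) (hg0 : g ≠ 0)
    (hf : f.order < 0) (hg : g.order < 0) (hfg : Int.gcd f.order g.order = 1) :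
    ∀ i ≤ -(f.order * g.order), ∃ w ∈ M, w ≠ 0 ∧ w.order = i := by
  intro i hi
  obtain ⟨m, hm⟩ := Int.exists_eq_neg_ofNat hf.le
  obtain ⟨n, hn⟩ := Int.exists_eq_neg_ofNat hg.le
  rw [hm, hn, neg_mul_neg] at hi
  obtain ⟨d, rfl⟩ := Int.exists_eq_neg_ofNat (hi.trans (neg_nonpos.2 (by positivity)))
  rw [hm, hn, Int.neg_gcd, Int.gcd_neg, Int.gcd_natCast_natCast] at hfg
  obtain ⟨a, b, hab⟩ := Nat.exists_mul_add_mul_eq_of_coprime hfg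
    (by exact_mod_cast neg_le_neg_iff.1 hi)
  refine ⟨f ^ a * g ^ b, M.mul_mem (M.pow_mem hfM a) (M.pow_mem hgM b),
    mul_ne_zero (pow_ne_zero _ hf0) (pow_ne_zero _ hg0), ?_⟩
  rw [HahnSeries.order_mul (pow_ne_zero _ hf0) (pow_ne_zero _ hg0), HahnSeries.order_pow,
    HahnSeries.order_pow, hm, hn, ← hab]
  push_cast
  ring

end

theorem stmt3 (A : Subalgebra k (LaurentSeries k))
    (hfg : ∃ f ∈ A, ∃ g ∈ A, f ≠ 0 ∧ g ≠ 0 ∧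
      (f : LaurentSeries k).order < 0 ∧ (g : LaurentSeries k).order < 0 ∧
      Int.gcd (f : LaurentSeries k).order (g : LaurentSeries k).order = 1) :
    FiniteDimensional k (LaurentSeries k ⧸ (subalgSub k A ⊔ posSub k)) := by
  obtain ⟨f, hfA, g, hgA, hf0, hg0, hf, hg, hfg⟩ := hfg
  refine finiteDimensional_quotient_of_forall_order (i₁ := -(f.order * g.order)) le_sup_right
    fun i hi => ?_
  obtain ⟨w, hwA, hw⟩ :=
    A.toSubmonoid.exists_mem_order_eq_of_coprime hfA hgA hf0 hg0 hf hg hfg i hi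
  exact ⟨w, Submodule.mem_sup_left hwA, hw⟩
end
end

section
/- Let k be a field, V = k((z)) ⊕ k((z)), V_0 = k[[z]] ⊕ k[[z]], W ⊆ V a Fredholm k-subspace of index μ, and l_1 = k((z)) ⊕ 0. If W ∩ l_1 ≠ 0 and dim_k(k((z))/(A_W + k[[z]])) < ∞ where A_W = {f ∈ k((z)) : fW ⊆ W}, then dim_k(W ∩ l_1 ∩ V_0) < ∞ and dim_k(l_1/(W ∩ l_1 + V_0 ∩ l_1)) < ∞. -/
/- Common setup: `k((z))` is `LaurentSeries k`, `V = k((z)) ⊕ k((z))`,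
`V₀ = k[[z]] ⊕ k[[z]]` (realized as the subspace of Laurent series with no
negative coefficients), `ν` is the `z`-adic valuation (`HahnSeries.order`). -/

set_option synthInstance.maxHeartbeats 1000000
set_option maxHeartbeats 1000000

noncomputable section

variable (k : Type) [Field k]

/-! Pick `f₀ ≠ 0` with `(f₀, 0) ∈ W`. Then `U = {f | (f, 0) ∈ W}` contains `f₀ A_W`, and
`f₀ k[[z]] ⊆ z^{ν(f₀)} k[[z]]` lies in `k[[z]]` up to finitely many monomials; so multiplication
by `f₀` maps the finite-dimensional `k((z))/(A_W + k[[z]])` onto `k((z))/(U + k[[z]])` up to a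
finite-dimensional error, and `k((z))/(U + k[[z]])` maps onto `l₁/(W ∩ l₁ + V₀ ∩ l₁)`. -/

section FiniteQuotient

variable {R M N : Type*} [Ring R] [AddCommGroup M] [Module R M] [AddCommGroup N] [Module R N]

theorem Module.Finite.quotient_of_surjective {f : M →ₗ[R] N} (hf : Function.Surjective f)
    {p : Submodule R M} {q : Submodule R N} (h : p ≤ q.comap f) [Module.Finite R (M ⧸ p)] :
    Module.Finite R (N ⧸ q) :=
  .of_surjective (p.mapQ q f h) <| by
    rw [← LinearMap.range_eq_top, Submodule.range_mapQ, LinearMap.range_eq_top.mpr hf,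
      Submodule.map_top, Submodule.range_mkQ]

theorem Module.Finite.quotient_of_quotient_sup (S F : Submodule R M) [Module.Finite R F]
    [Module.Finite R (M ⧸ (S ⊔ F))] : Module.Finite R (M ⧸ S) :=
  have := Module.Finite.equiv (Submodule.quotientQuotientEquivQuotientSup S F).symm
  .of_submodule_quotient (F.map S.mkQ)

end FiniteQuotient

section Shift

variable {k}

theorem mem_shiftSub_iff_le_orderTop {i : ℤ} {f : LaurentSeries k} :
    f ∈ shiftSub k i ↔ (i : WithTop ℤ) ≤ f.orderTop := by
  rw [HahnSeries.le_orderTop_iff_forall]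
  exact forall_congr' fun n => by rw [WithTop.coe_lt_coe]

theorem mul_mem_shiftSub {i j : ℤ} {f g : LaurentSeries k} (hf : f ∈ shiftSub k i)
    (hg : g ∈ shiftSub k j) : f * g ∈ shiftSub k (i + j) := by
  rw [mem_shiftSub_iff_le_orderTop] at *
  exact (add_le_add hf hg).trans HahnSeries.orderTop_add_le_mul

theorem mem_shiftSub_order (f : LaurentSeries k) : f ∈ shiftSub k f.order :=
  fun _ hn => HahnSeries.coeff_eq_zero_of_lt_order hn

theorem shiftSub_le_sup_span_single (n m : ℤ) :
    shiftSub k n ≤ shiftSub k m ⊔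
      Submodule.span k ((fun i => HahnSeries.single i (1 : k)) '' Set.Ico n m) := by
  intro f hf
  set t := ∑ i ∈ Finset.Ico n m, f.coeff i • HahnSeries.single i (1 : k)
  have ht : t ∈ Submodule.span k ((fun i => HahnSeries.single i (1 : k)) '' Set.Ico n m) := by
    exact Submodule.sum_mem _ fun i hi =>
      Submodule.smul_mem _ _ (Submodule.subset_span ⟨i, by simpa using hi, rfl⟩)
  have hft : f - t ∈ shiftSub k m := by
    intro j hj
    simp only [t, HahnSeries.coeff_sub, HahnSeries.coeff_sum, HahnSeries.coeff_smul,
      HahnSeries.coeff_single, smul_eq_mul, mul_ite, mul_one, mul_zero, Finset.sum_ite_eq,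
      Finset.mem_Ico, hj, and_true]
    split_ifs with hnj
    · exact sub_self _
    · rw [hf j (not_le.mp hnj), sub_zero]
  simpa using Submodule.add_mem_sup hft ht

end Shift

section LineOne

variable {k}

theorem mem_lineOne {x : V2 k} : x ∈ lineOne k ↔ x.2 = 0 := by
  simp [lineOne]

theorem inl_mem_lineOne (f : LaurentSeries k) : (f, 0) ∈ lineOne k :=
  mem_lineOne.mpr rfl

theorem inl_surjective_lineOne :
    Function.Surjective ((LinearMap.inl k (LaurentSeries k) (LaurentSeries k)).codRestrict
      (lineOne k) inl_mem_lineOne) := by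
  rintro ⟨⟨f, g⟩, hx⟩
  obtain rfl : g = 0 := mem_lineOne.mp hx
  exact ⟨f, rfl⟩

theorem finiteDimensional_lineOne_quotient (W : Submodule k (V2 k))
    [FiniteDimensional k (LaurentSeries k ⧸ (W.comap (LinearMap.inl k _ _) ⊔ posSub k))] :
    FiniteDimensional k
      (↥(lineOne k) ⧸
        Submodule.comap (lineOne k).subtype (W ⊓ lineOne k ⊔ V0 k ⊓ lineOne k)) := by
  refine Module.Finite.quotient_of_surjective inl_surjective_lineOne
    (p := W.comap (LinearMap.inl k _ _) ⊔ posSub k) (sup_le ?_ ?_)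
  · intro f hf
    exact Submodule.mem_sup_left ⟨hf, inl_mem_lineOne f⟩
  · intro f hf
    exact Submodule.mem_sup_right ⟨⟨hf, (posSub k).zero_mem⟩, inl_mem_lineOne f⟩

theorem finiteDimensional_quotient_comap_inl {W : Submodule k (V2 k)} {f₀ : LaurentSeries k}
    (hf₀ : f₀ ≠ 0) (hW₀ : (f₀, 0) ∈ W)
    [FiniteDimensional k (LaurentSeries k ⧸ (AWsub k W ⊔ posSub k))] :
    FiniteDimensional k (LaurentSeries k ⧸ (W.comap (LinearMap.inl k _ _) ⊔ posSub k)) := by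
  set F := Submodule.span k
    ((fun i => HahnSeries.single i (1 : k)) '' Set.Ico f₀.order 0)
  have : FiniteDimensional k F := FiniteDimensional.span_of_finite k ((Set.finite_Ico _ _).image _)
  have hsurj : Function.Surjective (LinearMap.mulLeft k f₀) :=
    fun g => ⟨f₀⁻¹ * g, mul_inv_cancel_left₀ hf₀ g⟩
  have : FiniteDimensional k
      (LaurentSeries k ⧸ (W.comap (LinearMap.inl k _ _) ⊔ posSub k ⊔ F)) := by
    refine Module.Finite.quotient_of_surjective hsurj (p := AWsub k W ⊔ posSub k) (sup_le ?_ ?_)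
    · intro a ha
      refine Submodule.mem_sup_left (Submodule.mem_sup_left ?_)
      simpa [mul_comm] using ha _ hW₀
    · intro g hg
      rw [sup_assoc]
      refine Submodule.mem_sup_right (shiftSub_le_sup_span_single _ _ ?_)
      simpa using mul_mem_shiftSub (mem_shiftSub_order f₀) hg
  exact Module.Finite.quotient_of_quotient_sup _ F

end LineOne

/-- Let `W` be Fredholm of index `μ` with `W ∩ l₁ ≠ 0` and
`dim_k k((z))/(A_W + k[[z]]) < ∞`.  Then `W ∩ l₁` is a Fredholm subspace of `l₁`:
`dim_k (W ∩ l₁ ∩ V₀) < ∞` and `dim_k l₁/(W ∩ l₁ + V₀ ∩ l₁) < ∞`. -/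
theorem stmt7 (μ : ℤ) (W : Submodule k (V2 k)) (hW : IsFredholm k μ W)
    (hl : W ⊓ lineOne k ≠ ⊥)
    (hA : FiniteDimensional k (LaurentSeries k ⧸ (AWsub k W ⊔ posSub k))) :
    FiniteDimensional k ↥(W ⊓ lineOne k ⊓ V0 k) ∧
    FiniteDimensional k
      (↥(lineOne k) ⧸
        Submodule.comap (lineOne k).subtype (W ⊓ lineOne k ⊔ V0 k ⊓ lineOne k)) := by
  refine ⟨?_, ?_⟩
  · have := hW.1
    exact Submodule.finiteDimensional_of_le (inf_le_inf_right _ inf_le_left)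
  obtain ⟨⟨f₀, g₀⟩, ⟨hW₀, hl₀⟩, hne⟩ := Submodule.exists_mem_ne_zero_of_ne_bot hl
  obtain rfl : g₀ = 0 := mem_lineOne.mp hl₀
  have hf₀ : f₀ ≠ 0 := fun h => hne (by rw [h]; rfl)
  have := finiteDimensional_quotient_comap_inl hf₀ hW₀
  exact finiteDimensional_lineOne_quotient W

end
end
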